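/- arXiv:1702.03157 — 6 statements merged into one kernel-verified Lean document; each statement's English description precedes it below -/
import Mathlib

section
/- If σ is a field automorphism of ℂ such that for every sequence of complex numbers (aₙ) converging to 0 the sequence (σ(aₙ)) is bounded, then σ is the identity or complex conjugation. -/
open Filter Topology

/-- If `‖z n‖ < 1 / (n + 1) ^ 2` but `ε ≤ ‖f (z n)‖`, then `(n + 1) • z n` is a null sequence
whose image has norm at least `(n + 1) ε`; so boundedness on null sequences forces continuity
at `0`. -/
theorem AddMonoidHom.continuous_of_bounded_on_null_sequences {E F : Type*}
    [SeminormedAddCommGroup E] [SeminormedAddCommGroup F] [NormedSpace ℝ F] (f : E →+ F)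
    (hf : ∀ a : ℕ → E, Tendsto a atTop (𝓝 0) → ∃ C : ℝ, ∀ n, ‖f (a n)‖ ≤ C) :
    Continuous f := by
  refine continuous_of_continuousAt_zero f (Metric.continuousAt_iff.2 fun ε hε => ?_)
  by_contra! h
  choose z hz hfz using fun n : ℕ => h (1 / ((n : ℝ) + 1) ^ 2) (by positivity)
  simp only [dist_zero_right, map_zero] at hz hfz
  have hnull : Tendsto (fun n => (n + 1 : ℕ) • z n) atTop (𝓝 0) := by
    refine squeeze_zero_norm (fun n => ?_) tendsto_one_div_add_atTop_nhds_zero_nat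
    calc ‖(n + 1 : ℕ) • z n‖ ≤ ((n : ℝ) + 1) * ‖z n‖ := by
          exact_mod_cast norm_nsmul_le (n := n + 1) (a := z n)
      _ ≤ ((n : ℝ) + 1) * (1 / ((n : ℝ) + 1) ^ 2) := by gcongr; exact (hz n).le
      _ = 1 / ((n : ℝ) + 1) := by field_simp
  obtain ⟨C, hC⟩ := hf _ hnull
  obtain ⟨n, hn⟩ := exists_nat_gt (C / ε)
  have hgrowth : ((n : ℝ) + 1) * ε ≤ ‖f ((n + 1 : ℕ) • z n)‖ := by
    rw [map_nsmul, ← Nat.cast_smul_eq_nsmul ℝ, norm_smul, Real.norm_natCast]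
    push_cast
    gcongr
    exact hfz n
  have := (div_lt_iff₀ hε).1 hn
  linarith [hC n]

theorem stmt_1_general (σ : ℂ →+* ℂ)
    (hb : ∀ a : ℕ → ℂ, Filter.Tendsto a Filter.atTop (nhds 0) →
      ∃ C : ℝ, ∀ n, ‖σ (a n)‖ ≤ C) :
    σ = RingHom.id ℂ ∨ σ = (starRingEnd ℂ) :=
  Complex.ringHom_eq_id_or_conj_of_continuous
    (σ.toAddMonoidHom.continuous_of_bounded_on_null_sequences hb)

theorem stmt_1 (σ : ℂ →+* ℂ) (hbij : Function.Bijective σ)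
    (hb : ∀ a : ℕ → ℂ, Filter.Tendsto a Filter.atTop (nhds 0) →
      ∃ C : ℝ, ∀ n, ‖σ (a n)‖ ≤ C) :
    σ = RingHom.id ℂ ∨ σ = (starRingEnd ℂ) :=
  stmt_1_general σ hb
end

section
/- If a closed subspace X of a complex Hilbert space H is compatible with every closed subspace of H, then X = 0 or X = H. -/
/-! Suppose `0 ≠ X ≠ H`, with `0 ≠ x ∈ X` and `v ∉ X`. Then `x + v ∉ X` as well, and a line
`Y` meeting `X` only in `0` makes the compatibility condition read `X ⟂ Y`. Applied to the lines
through `v` and through `x + v`, it gives `⟪x, v⟫ = 0 = ⟪x, x + v⟫`, hence `x = 0`. -/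

namespace Submodule

open InnerProductSpace

variable {𝕜 E : Type*} [RCLike 𝕜] [NormedAddCommGroup E] [InnerProductSpace 𝕜 E]

theorem isOrtho_of_inf_eq_bot {X Y : Submodule 𝕜 E}
    (h : ((X ⊓ Y)ᗮ ⊓ X) ⟂ ((X ⊓ Y)ᗮ ⊓ Y)) (hXY : X ⊓ Y = ⊥) : X ⟂ Y := by
  simpa only [hXY, bot_orthogonal_eq_top, top_inf_eq] using h

theorem inner_eq_zero_of_mem_of_notMem {X : Submodule 𝕜 E}
    (h : ∀ Y : Submodule 𝕜 E, IsClosed (Y : Set E) → ((X ⊓ Y)ᗮ ⊓ X) ⟂ ((X ⊓ Y)ᗮ ⊓ Y))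
    {x v : E} (hx : x ∈ X) (hv : v ∉ X) : ⟪x, v⟫_𝕜 = 0 := by
  have hXv : X ⊓ (𝕜 ∙ v) = ⊥ := (disjoint_span_singleton_of_notMem hv).eq_bot
  have hortho := isOrtho_of_inf_eq_bot (h _ (closed_of_finiteDimensional _)) hXv
  exact isOrtho_iff_inner_eq.mp hortho x hx v (mem_span_singleton_self v)

end Submodule

theorem stmt_6_general {H : Type*} [NormedAddCommGroup H] [InnerProductSpace ℂ H]
    (X : Submodule ℂ H)
    (h : ∀ Y : Submodule ℂ H, IsClosed (Y : Set H) →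
      Submodule.IsOrtho ((X ⊓ Y)ᗮ ⊓ X) ((X ⊓ Y)ᗮ ⊓ Y)) :
    X = ⊥ ∨ X = ⊤ := by
  by_contra! hX
  obtain ⟨x, hx, hx0⟩ := (Submodule.ne_bot_iff X).mp hX.1
  obtain ⟨v, -, hv⟩ := SetLike.exists_of_lt (lt_top_iff_ne_top.mpr hX.2)
  have hxv : x + v ∉ X := fun hxv => hv (by simpa using X.sub_mem hxv hx)
  have hxx : inner ℂ x x = 0 := by
    simpa [inner_add_right, Submodule.inner_eq_zero_of_mem_of_notMem h hx hv]
      using Submodule.inner_eq_zero_of_mem_of_notMem h hx hxv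
  exact hx0 (inner_self_eq_zero.mp hxx)

theorem stmt_6 {H : Type*} [NormedAddCommGroup H] [InnerProductSpace ℂ H] [CompleteSpace H]
    (X : Submodule ℂ H) (hX : IsClosed (X : Set H))
    (h : ∀ Y : Submodule ℂ H, IsClosed (Y : Set H) →
      Submodule.IsOrtho ((X ⊓ Y)ᗮ ⊓ X) ((X ⊓ Y)ᗮ ⊓ Y)) :
    X = ⊥ ∨ X = ⊤ :=
  stmt_6_general X h
end

section
/- Let H be a complex Hilbert space of dimension at least 3, and let L be a bounded invertible linear operator on H that maps orthogonal vectors to orthogonal vectors (x ⊥ y implies L(x) ⊥ L(y)). Then L is a nonzero scalar multiple of a unitary operator. -/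
/-!
If `x ⊥ y`, then `x + y ⊥ x - y` exactly when `‖x‖ = ‖y‖`; since `L` preserves orthogonality
and is additive, it maps orthogonal vectors of equal norm to vectors of equal norm. In dimension
at least three any two vectors of equal norm have a common orthogonal vector of the same norm,
so `‖L x‖ = k ‖x‖` for a constant `k`, which is positive as `L` is injective; then `k⁻¹ • L`
is a surjective isometry.
-/

open scoped InnerProductSpace

section

variable {𝕜 E F : Type*} [RCLike 𝕜] [NormedAddCommGroup E] [InnerProductSpace 𝕜 E]
  [NormedAddCommGroup F] [InnerProductSpace 𝕜 F]

theorem exists_norm_eq_inner_eq_zero_of_three_le_rank (hdim : 3 ≤ Module.rank 𝕜 E) (x y : E)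
    {r : ℝ} (hr : 0 ≤ r) :
    ∃ z : E, ⟪x, z⟫_𝕜 = 0 ∧ ⟪y, z⟫_𝕜 = 0 ∧ ‖z‖ = r := by
  set K := Submodule.span 𝕜 ({x, y} : Set E)
  have hK : K ≠ ⊤ := by
    intro hK
    have : Module.rank 𝕜 E ≤ 2 := calc
      Module.rank 𝕜 E = Module.rank 𝕜 K := by rw [hK, rank_top]
      _ ≤ Cardinal.mk ({x, y} : Set E) := rank_span_le _
      _ ≤ 2 := by
        refine Cardinal.mk_insert_le.trans ?_
        simp [one_add_one_eq_two]
    exact absurd (hdim.trans this) (by norm_num)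
  have : FiniteDimensional 𝕜 K := FiniteDimensional.span_of_finite 𝕜 (by simp)
  obtain ⟨w, hwK, hw⟩ := Submodule.exists_mem_ne_zero_of_ne_bot
    (mt Submodule.orthogonal_eq_bot_iff.mp hK)
  refine ⟨((r / ‖w‖ : ℝ) : 𝕜) • w, ?_, ?_, ?_⟩
  · rw [inner_smul_right, hwK x (Submodule.subset_span (by simp)), mul_zero]
  · rw [inner_smul_right, hwK y (Submodule.subset_span (by simp)), mul_zero]
  · rw [norm_smul, RCLike.norm_ofReal, abs_of_nonneg (by positivity),
      div_mul_cancel₀ _ (norm_ne_zero_iff.mpr hw)]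

theorem inner_add_sub_eq_zero_iff_of_inner_eq_zero {x y : E} (hxy : ⟪x, y⟫_𝕜 = 0) :
    ⟪x + y, x - y⟫_𝕜 = 0 ↔ ‖x‖ = ‖y‖ := by
  have hyx : ⟪y, x⟫_𝕜 = 0 := inner_eq_zero_symm.mp hxy
  have h : ⟪x + y, x - y⟫_𝕜 = ((‖x‖ ^ 2 - ‖y‖ ^ 2 : ℝ) : 𝕜) := by
    rw [inner_sub_right, inner_add_left, inner_add_left, hxy, hyx,
      inner_self_eq_norm_sq_to_K, inner_self_eq_norm_sq_to_K]
    push_cast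
    ring
  rw [h, RCLike.ofReal_eq_zero, sub_eq_zero]
  exact pow_left_inj₀ (norm_nonneg _) (norm_nonneg _) two_ne_zero

theorem norm_map_eq_of_inner_eq_zero {G : Type*} [FunLike G E F] [AddMonoidHomClass G E F]
    {f : G} (hf : ∀ x y, ⟪x, y⟫_𝕜 = 0 → ⟪f x, f y⟫_𝕜 = 0) {x y : E} (hxy : ⟪x, y⟫_𝕜 = 0)
    (hnorm : ‖x‖ = ‖y‖) : ‖f x‖ = ‖f y‖ := by
  have h := hf _ _ ((inner_add_sub_eq_zero_iff_of_inner_eq_zero hxy).2 hnorm)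
  rw [map_add, map_sub] at h
  exact (inner_add_sub_eq_zero_iff_of_inner_eq_zero (hf x y hxy)).1 h

theorem norm_map_eq_of_norm_eq {G : Type*} [FunLike G E F] [AddMonoidHomClass G E F]
    {f : G} (hdim : 3 ≤ Module.rank 𝕜 E) (hf : ∀ x y, ⟪x, y⟫_𝕜 = 0 → ⟪f x, f y⟫_𝕜 = 0) {x y : E}
    (hnorm : ‖x‖ = ‖y‖) : ‖f x‖ = ‖f y‖ := by
  obtain ⟨z, hxz, hyz, hz⟩ :=
    exists_norm_eq_inner_eq_zero_of_three_le_rank hdim x y (norm_nonneg x)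
  rw [norm_map_eq_of_inner_eq_zero hf hxz hz.symm,
    norm_map_eq_of_inner_eq_zero hf hyz (hz.trans hnorm).symm]

theorem exists_norm_map_eq_mul_norm {G : Type*} [FunLike G E F] [LinearMapClass G 𝕜 E F]
    {f : G} (hdim : 3 ≤ Module.rank 𝕜 E) (hf : ∀ x y, ⟪x, y⟫_𝕜 = 0 → ⟪f x, f y⟫_𝕜 = 0) :
    ∃ k : ℝ, ∀ x, ‖f x‖ = k * ‖x‖ := by
  obtain ⟨e, -, -, he⟩ :=
    exists_norm_eq_inner_eq_zero_of_three_le_rank hdim 0 0 zero_le_one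
  refine ⟨‖f e‖, fun x => ?_⟩
  have hx : ‖((‖x‖ : ℝ) : 𝕜) • e‖ = ‖x‖ := by
    rw [norm_smul, he, mul_one, RCLike.norm_ofReal, abs_norm]
  rw [norm_map_eq_of_norm_eq hdim hf hx.symm, map_smul, norm_smul, RCLike.norm_ofReal, abs_norm,
    mul_comm]

theorem exists_linearIsometryEquiv_of_norm_map_eq_mul (f : E ≃L[𝕜] F) {k : ℝ} (hk : 0 < k)
    (hf : ∀ x, ‖f x‖ = k * ‖x‖) :
    ∃ U : E ≃ₗᵢ[𝕜] F, (f : E →L[𝕜] F) = (k : 𝕜) • (U : E →L[𝕜] F) := by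
  have hk' : (k : 𝕜) ≠ 0 := RCLike.ofReal_ne_zero.mpr hk.ne'
  refine ⟨⟨f.toLinearEquiv.trans (LinearEquiv.smulOfNeZero 𝕜 F _ (inv_ne_zero hk')), fun x => ?_⟩,
    ?_⟩
  · simp [norm_smul, hf, abs_of_pos hk, hk.ne']
  · ext x
    simp [smul_smul, hk']

end

theorem stmt_12_general {H : Type*} [NormedAddCommGroup H] [InnerProductSpace ℂ H]
    (hdim : 3 ≤ Module.rank ℂ H) (L : H ≃L[ℂ] H)
    (horth : ∀ x y : H, (inner ℂ x y : ℂ) = 0 → (inner ℂ (L x) (L y) : ℂ) = 0) :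
    ∃ (c : ℂ) (U : H →L[ℂ] H), c ≠ 0 ∧
      (∀ x y : H, (inner ℂ (U x) (U y) : ℂ) = (inner ℂ x y : ℂ)) ∧
      Function.Bijective U ∧ (L : H →L[ℂ] H) = c • U := by
  obtain ⟨k, hk⟩ := exists_norm_map_eq_mul_norm hdim horth
  obtain ⟨e, -, -, he⟩ :=
    exists_norm_eq_inner_eq_zero_of_three_le_rank hdim 0 0 zero_le_one
  have hkpos : 0 < k := by
    have hLe : 0 < ‖L e‖ :=
      norm_pos_iff.2 (L.map_ne_zero_iff.2 (norm_ne_zero_iff.1 (by simp [he])))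
    rwa [hk, he, mul_one] at hLe
  obtain ⟨U, hU⟩ := exists_linearIsometryEquiv_of_norm_map_eq_mul L hkpos hk
  exact ⟨k, U, Complex.ofReal_ne_zero.2 hkpos.ne', U.inner_map_map, U.bijective, hU⟩

theorem stmt_12 {H : Type*} [NormedAddCommGroup H] [InnerProductSpace ℂ H] [CompleteSpace H]
    (hdim : 3 ≤ Module.rank ℂ H) (L : H ≃L[ℂ] H)
    (horth : ∀ x y : H, (inner ℂ x y : ℂ) = 0 → (inner ℂ (L x) (L y) : ℂ) = 0) :
    ∃ (c : ℂ) (U : H →L[ℂ] H), c ≠ 0 ∧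
      (∀ x y : H, (inner ℂ (U x) (U y) : ℂ) = (inner ℂ x y : ℂ)) ∧
      Function.Bijective U ∧ (L : H →L[ℂ] H) = c • U :=
  stmt_12_general hdim L horth
end

section
/- Let H be a complex Hilbert space with dim H ≥ 3 and L an invertible linear map on H sending orthogonal vectors to orthogonal vectors. Then the function x ↦ ‖L(x)‖ is constant on the set of unit vectors of H. -/
/-! Orthogonality preservation forces `‖L x‖ = ‖L y‖` whenever `x ⊥ y` and `‖x‖ = ‖y‖`, because then
`x + y ⊥ x - y` and `⟪L (x + y), L (x - y)⟫ = ‖L x‖² - ‖L y‖²`. In dimension at least three any two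
unit vectors have a common orthogonal unit vector `w`, and comparing both with `w` gives the claim. -/

open Submodule
open scoped InnerProductSpace

section

variable {𝕜 E F : Type*} [RCLike 𝕜] [NormedAddCommGroup E] [InnerProductSpace 𝕜 E]
  [NormedAddCommGroup F] [InnerProductSpace 𝕜 F]

theorem inner_add_sub_eq_norm_sq_sub_norm_sq {x y : E} (hxy : ⟪x, y⟫_𝕜 = 0) :
    ⟪x + y, x - y⟫_𝕜 = (‖x‖ : 𝕜) ^ 2 - (‖y‖ : 𝕜) ^ 2 := by
  have hyx : ⟪y, x⟫_𝕜 = 0 := inner_eq_zero_symm.mp hxy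
  simp only [inner_add_left, inner_sub_right, hxy, hyx, inner_self_eq_norm_sq_to_K]
  ring

theorem LinearMap.norm_map_eq_of_inner_eq_zero (L : E →ₗ[𝕜] F)
    (horth : ∀ x y, ⟪x, y⟫_𝕜 = 0 → ⟪L x, L y⟫_𝕜 = 0) {x y : E} (hxy : ⟪x, y⟫_𝕜 = 0)
    (hnorm : ‖x‖ = ‖y‖) : ‖L x‖ = ‖L y‖ := by
  have hdiag : ⟪x + y, x - y⟫_𝕜 = 0 := by
    rw [inner_add_sub_eq_norm_sq_sub_norm_sq hxy, hnorm, sub_self]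
  have himage := horth _ _ hdiag
  rw [map_add, map_sub, inner_add_sub_eq_norm_sq_sub_norm_sq (horth x y hxy), sub_eq_zero]
    at himage
  exact (sq_eq_sq₀ (norm_nonneg _) (norm_nonneg _)).mp (by exact_mod_cast himage)

theorem Submodule.orthogonal_ne_bot_of_rank_lt (K : Submodule 𝕜 E) [K.HasOrthogonalProjection]
    (hrank : Module.rank 𝕜 K < Module.rank 𝕜 E) : Kᗮ ≠ ⊥ := by
  rw [Ne, orthogonal_eq_bot_iff]
  rintro rfl
  exact hrank.ne (rank_top 𝕜 E)

theorem exists_norm_eq_one_inner_eq_zero_of_three_le_rank (hdim : 3 ≤ Module.rank 𝕜 E)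
    (x y : E) : ∃ w : E, ‖w‖ = 1 ∧ ⟪x, w⟫_𝕜 = 0 ∧ ⟪y, w⟫_𝕜 = 0 := by
  set K := span 𝕜 ({x, y} : Set E)
  have : FiniteDimensional 𝕜 K := FiniteDimensional.span_of_finite 𝕜 (Set.toFinite _)
  have hrank : Module.rank 𝕜 K < Module.rank 𝕜 E :=
    calc Module.rank 𝕜 K ≤ Cardinal.mk ({x, y} : Set E) := rank_span_le _
      _ ≤ 2 := by
        refine Cardinal.mk_insert_le.trans ?_
        rw [Cardinal.mk_singleton]
        norm_num
      _ < 3 := by norm_num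
      _ ≤ Module.rank 𝕜 E := hdim
  obtain ⟨z, hzK, hz⟩ := exists_mem_ne_zero_of_ne_bot (K.orthogonal_ne_bot_of_rank_lt hrank)
  have hwK : (‖z‖⁻¹ : 𝕜) • z ∈ Kᗮ := Kᗮ.smul_mem _ hzK
  exact ⟨_, norm_smul_inv_norm hz,
    inner_right_of_mem_orthogonal (subset_span (by simp)) hwK,
    inner_right_of_mem_orthogonal (subset_span (by simp)) hwK⟩

end

theorem stmt_13_general {H : Type*} [NormedAddCommGroup H] [InnerProductSpace ℂ H]
    (hdim : 3 ≤ Module.rank ℂ H) (L : H →ₗ[ℂ] H)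
    (horth : ∀ x y : H, (inner ℂ x y : ℂ) = 0 → (inner ℂ (L x) (L y) : ℂ) = 0) :
    ∀ x y : H, ‖x‖ = 1 → ‖y‖ = 1 → ‖L x‖ = ‖L y‖ := by
  intro x y hx hy
  obtain ⟨w, hw, hxw, hyw⟩ := exists_norm_eq_one_inner_eq_zero_of_three_le_rank hdim x y
  calc ‖L x‖ = ‖L w‖ := L.norm_map_eq_of_inner_eq_zero horth hxw (hx.trans hw.symm)
    _ = ‖L y‖ := (L.norm_map_eq_of_inner_eq_zero horth hyw (hy.trans hw.symm)).symm

theorem stmt_13 {H : Type*} [NormedAddCommGroup H] [InnerProductSpace ℂ H]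
    (hdim : 3 ≤ Module.rank ℂ H) (L : H →ₗ[ℂ] H) (hbij : Function.Bijective L)
    (horth : ∀ x y : H, (inner ℂ x y : ℂ) = 0 → (inner ℂ (L x) (L y) : ℂ) = 0) :
    ∀ x y : H, ‖x‖ = 1 → ‖y‖ = 1 → ‖L x‖ = ‖L y‖ :=
  stmt_13_general hdim L horth
end

section
/- Let V be a vector space over a field and k a natural number with k < dim V. For any X, Y in the Grassmannian of k-dimensional subspaces of V, the path distance between X and Y in the Grassmann graph (where two k-dimensional subspaces are adjacent if their intersection has dimension k−1) equals k − dim(X ∩ Y). -/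
def grassmannGraph (K V : Type*) [Field K] [AddCommGroup V] [Module K V] (k : ℕ) :
    SimpleGraph {X : Submodule K V // FiniteDimensional K X ∧ Module.finrank K X = k} where
  Adj X Y := X ≠ Y ∧ Module.finrank K ↥(X.1 ⊓ Y.1) = k - 1
  symm := by
    constructor
    rintro X Y ⟨h1, h2⟩
    refine ⟨h1.symm, ?_⟩
    rwa [inf_comm]
  loopless := by
    constructor
    rintro X ⟨h, -⟩
    exact h rfl

/-!
A step along an edge changes `X` in one dimension only, so it can raise `dim (X ∩ Y)` by at most
one: this gives `k - dim (X ∩ Y)` as a lower bound for the distance. Conversely, if `X ≠ Y`,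
replacing a hyperplane of `X` through `X ∩ Y` by that hyperplane plus a vector of `Y \ X` gives a
neighbour of `X` meeting `Y` in one more dimension, so the bound is attained.
-/

open Module Submodule

namespace Submodule

variable {K V : Type*} [Field K] [AddCommGroup V] [Module K V]

theorem finrank_sup_span_singleton_of_notMem (A : Submodule K V) [FiniteDimensional K A] {x : V}
    (hx : x ∉ A) : finrank K ↥(A ⊔ K ∙ x) = finrank K A + 1 := by
  have hx0 : x ≠ 0 := fun h => hx (h ▸ A.zero_mem)
  have h := finrank_sup_add_finrank_inf_eq A (K ∙ x)
  rw [finrank_span_singleton hx0, (disjoint_span_singleton_of_notMem hx).eq_bot,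
    finrank_bot] at h
  omega

theorem exists_le_le_finrank_eq {A B : Submodule K V} [FiniteDimensional K B] (hAB : A ≤ B)
    {m : ℕ} (hAm : finrank K A ≤ m) (hmB : m ≤ finrank K B) :
    ∃ W : Submodule K V, A ≤ W ∧ W ≤ B ∧ finrank K W = m := by
  have : FiniteDimensional K A := finiteDimensional_of_le hAB
  obtain ⟨n, rfl⟩ := Nat.exists_eq_add_of_le hAm
  induction n with
  | zero => exact ⟨A, le_rfl, hAB, rfl⟩
  | succ n ih =>
    obtain ⟨W, hAW, hWB, hW⟩ := ih (by omega) (by omega)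
    have : FiniteDimensional K W := finiteDimensional_of_le hWB
    have hWB' : W < B := lt_of_le_of_ne hWB fun h => by subst h; omega
    obtain ⟨x, hxB, hxW⟩ := SetLike.exists_of_lt hWB'
    refine ⟨W ⊔ K ∙ x, le_sup_of_le_left hAW, sup_le hWB ((span_singleton_le_iff_mem x B).2 hxB),
      ?_⟩
    rw [finrank_sup_span_singleton_of_notMem W hxW, hW, add_assoc]

theorem finrank_inf_add_finrank_inf_le (X Y Z : Submodule K V) [FiniteDimensional K X]
    [FiniteDimensional K Z] :
    finrank K ↥(Z ⊓ Y) + finrank K ↥(X ⊓ Z) ≤ finrank K Z + finrank K ↥(X ⊓ Y) := by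
  have hsup : finrank K ↥(Z ⊓ Y ⊔ X ⊓ Z) ≤ finrank K Z :=
    finrank_mono (sup_le inf_le_left inf_le_right)
  have hinf : finrank K ↥(Z ⊓ Y ⊓ (X ⊓ Z)) ≤ finrank K ↥(X ⊓ Y) :=
    finrank_mono (le_inf (inf_le_right.trans inf_le_left) (inf_le_left.trans inf_le_right))
  have := finrank_sup_add_finrank_inf_eq (Z ⊓ Y) (X ⊓ Z)
  omega

end Submodule

namespace grassmannGraph

variable {K V : Type*} [Field K] [AddCommGroup V] [Module K V] {k : ℕ}

local notation "𝔾" => {X : Submodule K V // FiniteDimensional K X ∧ Module.finrank K X = k}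

theorem finrank_inf_le (X Y : 𝔾) : finrank K ↥(X.1 ⊓ Y.1) ≤ k := by
  have := X.2.1
  exact (finrank_mono inf_le_left).trans_eq X.2.2

theorem finrank_inf_lt_of_ne {X Y : 𝔾} (hXY : X ≠ Y) : finrank K ↥(X.1 ⊓ Y.1) < k := by
  refine (finrank_inf_le X Y).lt_of_ne fun h => hXY (Subtype.ext ?_)
  have := X.2.1
  have := Y.2.1
  calc X.1 = X.1 ⊓ Y.1 := (eq_of_le_of_finrank_eq inf_le_left (by rw [h, X.2.2])).symm
    _ = Y.1 := eq_of_le_of_finrank_eq inf_le_right (by rw [h, Y.2.2])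

theorem finrank_inf_le_of_adj {X Z : 𝔾} (hXZ : (grassmannGraph K V k).Adj X Z) (Y : 𝔾) :
    finrank K ↥(Z.1 ⊓ Y.1) ≤ finrank K ↥(X.1 ⊓ Y.1) + 1 := by
  have := X.2.1
  have := Z.2.1
  have := finrank_inf_add_finrank_inf_le X.1 Y.1 Z.1
  have := Z.2.2
  have := hXZ.2
  -- needed when `k = 0`, where `k - 1` truncates to `0`
  have := finrank_inf_le Z Y
  omega

theorem le_finrank_inf_add_length {X Y : 𝔾} (p : (grassmannGraph K V k).Walk X Y) :
    k ≤ finrank K ↥(X.1 ⊓ Y.1) + p.length := by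
  induction p with
  | @nil X =>
    rw [inf_idem, X.2.2]
    omega
  | @cons _ _ W hXZ _ ih =>
    rw [SimpleGraph.Walk.length_cons]
    have := finrank_inf_le_of_adj hXZ W
    omega

theorem exists_adj_finrank_inf_lt {X Y : 𝔾} (hXY : X ≠ Y) :
    ∃ Z, (grassmannGraph K V k).Adj X Z ∧ finrank K ↥(X.1 ⊓ Y.1) < finrank K ↥(Z.1 ⊓ Y.1) := by
  have := X.2.1
  have := Y.2.1
  have hXYk := finrank_inf_lt_of_ne hXY
  obtain ⟨y, hyY, hyX⟩ : ∃ y ∈ Y.1, y ∉ X.1 := SetLike.not_le_iff_exists.1 fun hYX =>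
    hXY (Subtype.ext (eq_of_le_of_finrank_eq hYX (by rw [X.2.2, Y.2.2])).symm)
  obtain ⟨W, hXYW, hWX, hW⟩ := exists_le_le_finrank_eq (inf_le_left : X.1 ⊓ Y.1 ≤ X.1)
    (m := k - 1) (by omega) (by omega)
  have := finiteDimensional_of_le hWX
  have hyW : y ∉ W := fun hy => hyX (hWX hy)
  have hZ : finrank K ↥(W ⊔ K ∙ y) = k := by
    rw [finrank_sup_span_singleton_of_notMem W hyW, hW]
    omega
  let Z : 𝔾 := ⟨W ⊔ K ∙ y, inferInstance, hZ⟩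
  have hyZ : y ∈ Z.1 := mem_sup_right (mem_span_singleton_self y)
  have hXZ : X.1 ⊓ Z.1 < Z.1 := inf_le_right.lt_of_ne fun h => hyX (h ▸ hyZ).1
  have hadj : finrank K ↥(X.1 ⊓ Z.1) = k - 1 := by
    have := finrank_lt_finrank_of_lt hXZ
    have : finrank K W ≤ finrank K ↥(X.1 ⊓ Z.1) := finrank_mono (le_inf hWX le_sup_left)
    rw [Z.2.2] at *
    omega
  refine ⟨Z, ⟨fun h => hyX (h ▸ hyZ), hadj⟩, ?_⟩
  have hXYy : X.1 ⊓ Y.1 ⊔ K ∙ y ≤ Z.1 ⊓ Y.1 :=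
    sup_le (le_inf (hXYW.trans le_sup_left) inf_le_right)
      ((span_singleton_le_iff_mem y _).2 ⟨hyZ, hyY⟩)
  have := finrank_mono (R := K) hXYy
  rw [finrank_sup_span_singleton_of_notMem _ fun h => hyX (mem_inf.1 h).1] at this
  omega

theorem exists_walk_length_le (X Y : 𝔾) :
    ∃ p : (grassmannGraph K V k).Walk X Y, p.length ≤ k - finrank K ↥(X.1 ⊓ Y.1) := by
  obtain ⟨n, hn⟩ : ∃ n, k - finrank K ↥(X.1 ⊓ Y.1) = n := ⟨_, rfl⟩
  induction n generalizing X with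
  | zero =>
    obtain rfl : X = Y := by
      by_contra hXY
      have := finrank_inf_lt_of_ne hXY
      omega
    exact ⟨.nil, by simp⟩
  | succ n ih =>
    have hXY : X ≠ Y := by
      rintro rfl
      rw [inf_idem, X.2.2] at hn
      omega
    obtain ⟨Z, hXZ, hZY⟩ := exists_adj_finrank_inf_lt hXY
    have := finrank_inf_le_of_adj hXZ Y
    obtain ⟨p, hp⟩ := ih Z (by omega)
    exact ⟨.cons hXZ p, by rw [SimpleGraph.Walk.length_cons]; omega⟩

end grassmannGraph

theorem stmt_16_general {K V : Type*} [Field K] [AddCommGroup V] [Module K V] (k : ℕ)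
    (X Y : {X : Submodule K V // FiniteDimensional K X ∧ Module.finrank K X = k}) :
    (grassmannGraph K V k).dist X Y = k - Module.finrank K ↥(X.1 ⊓ Y.1) := by
  obtain ⟨p, hp⟩ := grassmannGraph.exists_walk_length_le X Y
  obtain ⟨q, hq⟩ := SimpleGraph.Reachable.exists_walk_length_eq_dist ⟨p⟩
  have := SimpleGraph.dist_le p
  have := grassmannGraph.le_finrank_inf_add_length q
  omega

theorem stmt_16 {K V : Type*} [Field K] [AddCommGroup V] [Module K V] (k : ℕ)
    (hk : (k : Cardinal) < Module.rank K V)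
    (X Y : {X : Submodule K V // FiniteDimensional K X ∧ Module.finrank K X = k}) :
    (grassmannGraph K V k).dist X Y = k - Module.finrank K ↥(X.1 ⊓ Y.1) :=
  stmt_16_general k X Y
end

section
/- Let V be a vector space over a field and k ≥ 2 with (if dim V is finite) k ≤ dim V − 2. Every clique of the Grassmann graph Γ_k(V) containing at least three elements is contained in a star [S⟩_k (all k-dimensional subspaces containing a fixed (k−1)-dimensional subspace S) or a top ⟨U]_k (all k-dimensional subspaces contained in a fixed (k+1)-dimensional subspace U). -/
/-!
Two distinct members X, Y of the clique meet in a (k-1)-space and span a (k+1)-space. For a third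
member Z, the (k-1)-spaces Z ⊓ X and Z ⊓ Y either coincide, and then they equal X ⊓ Y ≤ Z, or
they are distinct hyperplanes of Z, and then Z ≤ X ⊔ Y. If some Z is of the second kind, a member
W outside X ⊔ Y would contain both X ⊓ Y and X ⊓ Z, two distinct hyperplanes of X, hence X itself,
forcing W = X.
-/

open Module

namespace Submodule

variable {K V : Type*} [Field K] [AddCommGroup V] [Module K V]

theorem sup_eq_of_finrank_eq_succ {A B Z : Submodule K V} [FiniteDimensional K Z] {n : ℕ}
    (hA : A ≤ Z) (hB : B ≤ Z) (hAB : A ≠ B)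
    (hrA : finrank K A = n) (hrB : finrank K B = n) (hrZ : finrank K Z = n + 1) :
    A ⊔ B = Z := by
  have : FiniteDimensional K A := finiteDimensional_of_le hA
  have : FiniteDimensional K ↥(A ⊔ B) := finiteDimensional_of_le (sup_le hA hB)
  have hBA : ¬B ≤ A := fun h => hAB (eq_of_le_of_finrank_eq h (hrB.trans hrA.symm)).symm
  have hlt : finrank K A < finrank K ↥(A ⊔ B) := finrank_lt_finrank_of_lt (left_lt_sup.2 hBA)
  exact eq_of_le_of_finrank_le (sup_le hA hB) (by omega)

end Submodule

open Submodule

structure IsGrassmannClique {K V : Type*} [Field K] [AddCommGroup V] [Module K V]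
    (k : ℕ) (C : Set (Submodule K V)) : Prop where
  finiteDimensional : ∀ X ∈ C, FiniteDimensional K X
  finrank_eq : ∀ X ∈ C, finrank K X = k
  finrank_inf_eq : ∀ X ∈ C, ∀ Y ∈ C, X ≠ Y → finrank K ↥(X ⊓ Y) = k - 1

namespace IsGrassmannClique

variable {K V : Type*} [Field K] [AddCommGroup V] [Module K V] {k : ℕ}
  {C : Set (Submodule K V)} {X Y Z W : Submodule K V}

theorem finrank_sup (hC : IsGrassmannClique k C) (hk : 1 ≤ k) (hX : X ∈ C) (hY : Y ∈ C)
    (hXY : X ≠ Y) : finrank K ↥(X ⊔ Y) = k + 1 := by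
  have := hC.finiteDimensional X hX
  have := hC.finiteDimensional Y hY
  have := finrank_sup_add_finrank_inf_eq X Y
  rw [hC.finrank_eq X hX, hC.finrank_eq Y hY, hC.finrank_inf_eq X hX Y hY hXY] at this
  omega

theorem inf_le_or_le_sup (hC : IsGrassmannClique k C) (hk : 1 ≤ k) (hX : X ∈ C) (hY : Y ∈ C)
    (hZ : Z ∈ C) (hXY : X ≠ Y) : X ⊓ Y ≤ Z ∨ Z ≤ X ⊔ Y := by
  by_cases hZX : Z = X
  · exact Or.inr (hZX ▸ le_sup_left)
  by_cases hZY : Z = Y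
  · exact Or.inr (hZY ▸ le_sup_right)
  have := hC.finiteDimensional X hX
  have := hC.finiteDimensional Z hZ
  have hrX := hC.finrank_inf_eq Z hZ X hX hZX
  have hrY := hC.finrank_inf_eq Z hZ Y hY hZY
  by_cases hsame : Z ⊓ X = Z ⊓ Y
  · have : FiniteDimensional K ↥(X ⊓ Y) := finiteDimensional_of_le inf_le_left
    have hle : Z ⊓ X ≤ X ⊓ Y := le_inf inf_le_right (hsame ▸ inf_le_right)
    left
    rw [← eq_of_le_of_finrank_eq hle (hrX.trans (hC.finrank_inf_eq X hX Y hY hXY).symm)]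
    exact inf_le_left
  · have hspan : Z ⊓ X ⊔ Z ⊓ Y = Z :=
      sup_eq_of_finrank_eq_succ inf_le_left inf_le_left hsame hrX hrY
        (by rw [hC.finrank_eq Z hZ]; omega)
    right
    rw [← hspan]
    exact sup_le_sup inf_le_right inf_le_right

theorem le_sup_of_not_inf_le (hC : IsGrassmannClique k C) (hk : 1 ≤ k) (hX : X ∈ C)
    (hY : Y ∈ C) (hZ : Z ∈ C) (hXY : X ≠ Y) (hXYZ : ¬X ⊓ Y ≤ Z) (hW : W ∈ C) :
    W ≤ X ⊔ Y := by
  have hZU : Z ≤ X ⊔ Y := (hC.inf_le_or_le_sup hk hX hY hZ hXY).resolve_left hXYZ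
  have hXZ : X ≠ Z := by
    rintro rfl
    exact hXYZ inf_le_left
  by_contra hWU
  have hXY_le : X ⊓ Y ≤ W := (hC.inf_le_or_le_sup hk hX hY hW hXY).resolve_right hWU
  have hXZ_le : X ⊓ Z ≤ W := (hC.inf_le_or_le_sup hk hX hZ hW hXZ).resolve_right
    fun h => hWU (h.trans (sup_le le_sup_left hZU))
  have hne : X ⊓ Y ≠ X ⊓ Z := fun h => hXYZ (h ▸ inf_le_right)
  have := hC.finiteDimensional X hX
  have := hC.finiteDimensional W hW
  have hspan : X ⊓ Y ⊔ X ⊓ Z = X :=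
    sup_eq_of_finrank_eq_succ inf_le_left inf_le_left hne (hC.finrank_inf_eq X hX Y hY hXY)
      (hC.finrank_inf_eq X hX Z hZ hXZ) (by rw [hC.finrank_eq X hX]; omega)
  have hXW : X ≤ W := hspan ▸ sup_le hXY_le hXZ_le
  have hWX : X = W :=
    eq_of_le_of_finrank_eq hXW (by rw [hC.finrank_eq X hX, hC.finrank_eq W hW])
  exact hWU (hWX ▸ le_sup_left)

end IsGrassmannClique

theorem stmt_18_general {K V : Type*} [Field K] [AddCommGroup V] [Module K V]
    (k : ℕ) (hk : 2 ≤ k)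
    (C : Set (Submodule K V))
    (hdim : ∀ X ∈ C, FiniteDimensional K X ∧ Module.finrank K X = k)
    (hclique : ∀ X ∈ C, ∀ Y ∈ C, X ≠ Y → Module.finrank K ↥(X ⊓ Y) = k - 1)
    (hcard : 3 ≤ C.encard) :
    (∃ S : Submodule K V, FiniteDimensional K S ∧ Module.finrank K S = k - 1 ∧
      ∀ X ∈ C, S ≤ X) ∨
    (∃ U : Submodule K V, FiniteDimensional K U ∧ Module.finrank K U = k + 1 ∧
      ∀ X ∈ C, X ≤ U) := by
  have hC : IsGrassmannClique k C :=
    ⟨fun X hX => (hdim X hX).1, fun X hX => (hdim X hX).2, hclique⟩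
  obtain ⟨X, Y, hX, hY, hXY⟩ := Set.one_lt_encard_iff.mp (lt_of_lt_of_le (by norm_num) hcard)
  have := hC.finiteDimensional X hX
  have := hC.finiteDimensional Y hY
  by_cases hstar : ∀ Z ∈ C, X ⊓ Y ≤ Z
  · exact Or.inl ⟨X ⊓ Y, finiteDimensional_of_le inf_le_left, hclique X hX Y hY hXY, hstar⟩
  obtain ⟨Z, hZ, hXYZ⟩ := not_forall₂.mp hstar
  exact Or.inr ⟨X ⊔ Y, inferInstance, hC.finrank_sup (by omega) hX hY hXY,
    fun W hW => hC.le_sup_of_not_inf_le (by omega) hX hY hZ hXY hXYZ hW⟩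

theorem stmt_18 {K V : Type*} [Field K] [AddCommGroup V] [Module K V]
    (k : ℕ) (hk : 2 ≤ k)
    (hfin : ∀ _ : FiniteDimensional K V, k + 2 ≤ Module.finrank K V)
    (C : Set (Submodule K V))
    (hdim : ∀ X ∈ C, FiniteDimensional K X ∧ Module.finrank K X = k)
    (hclique : ∀ X ∈ C, ∀ Y ∈ C, X ≠ Y → Module.finrank K ↥(X ⊓ Y) = k - 1)
    (hcard : 3 ≤ C.encard) :
    (∃ S : Submodule K V, FiniteDimensional K S ∧ Module.finrank K S = k - 1 ∧
      ∀ X ∈ C, S ≤ X) ∨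
    (∃ U : Submodule K V, FiniteDimensional K U ∧ Module.finrank K U = k + 1 ∧
      ∀ X ∈ C, X ≤ U) :=
  stmt_18_general k hk C hdim hclique hcard
end
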